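/- If z·ln 2 > α and 2(αz + r)ln 2 - α² > 0, then the cutoff θ₁ = z²·ln 2/(2(αz+r)ln 2 - α²) - 1 is strictly decreasing in α; that is, for fixed standard z, more hawkish incumbents (higher α) have a strictly lower marginal re-elected ability. -/

import Mathlib

open Real

theorem strictMonoOn_two_mul_mul_sub_sq (c : ℝ) :
    StrictMonoOn (fun x : ℝ => 2 * c * x - x ^ 2) (Set.Iic c) := by
  intro a ha b hb hab
  simp only [Set.mem_Iic] at ha hb
  nlinarith

theorem stmt_9_general (z r : ℝ) :
    ∀ α₁ α₂ : ℝ, 0 < α₁ → 0 < α₂ →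
      α₁ < z * Real.log 2 → α₂ < z * Real.log 2 →
      0 < 2 * (α₁ * z + r) * Real.log 2 - α₁ ^ 2 →
      0 < 2 * (α₂ * z + r) * Real.log 2 - α₂ ^ 2 →
      α₁ < α₂ →
      z ^ 2 * Real.log 2 / (2 * (α₂ * z + r) * Real.log 2 - α₂ ^ 2) - 1 <
      z ^ 2 * Real.log 2 / (2 * (α₁ * z + r) * Real.log 2 - α₁ ^ 2) - 1 := by
  intro α₁ α₂ hα₁ _ hα₁z hα₂z hD₁ _ hlt
  have hlog : 0 < log 2 := log_pos one_lt_two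
  have hz : 0 < z := pos_of_mul_pos_left (hα₁.trans hα₁z) hlog.le
  -- The denominator is `2 c α - α ^ 2 + 2 r log 2` with `c = z log 2`.
  have hden : 2 * (α₁ * z + r) * log 2 - α₁ ^ 2 < 2 * (α₂ * z + r) * log 2 - α₂ ^ 2 := by
    have := strictMonoOn_two_mul_mul_sub_sq (z * log 2) hα₁z.le hα₂z.le hlt
    linear_combination this
  exact sub_lt_sub_right (div_lt_div_of_pos_left (by positivity) hD₁ hden) 1

/-- If `z·ln 2 > α` and the denominator is positive (for both ideologies), then
the cutoff `θ₁(α) = z²·ln 2/(2(αz+r)·ln 2 - α²) - 1` is strictly decreasing in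
`α`: more hawkish incumbents have a strictly lower marginal re-elected ability. -/
theorem stmt_9 (z r : ℝ) (hz : 0 < z) (hr : 0 ≤ r) :
    ∀ α₁ α₂ : ℝ, 0 < α₁ → 0 < α₂ →
      α₁ < z * Real.log 2 → α₂ < z * Real.log 2 →
      0 < 2 * (α₁ * z + r) * Real.log 2 - α₁ ^ 2 →
      0 < 2 * (α₂ * z + r) * Real.log 2 - α₂ ^ 2 →
      α₁ < α₂ →
      z ^ 2 * Real.log 2 / (2 * (α₂ * z + r) * Real.log 2 - α₂ ^ 2) - 1 <
      z ^ 2 * Real.log 2 / (2 * (α₁ * z + r) * Real.log 2 - α₁ ^ 2) - 1 :=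
  stmt_9_general z r
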